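/- Let F be a field, let N ⊴ G be groups (possibly infinite), and let V be an irreducible FG-module that admits an irreducible FN-submodule W. Then: (a) V = Σ_{g∈G} gW and V is a completely reducible FN-module; (b) res_N^G V is the direct sum of its homogeneous components, and G acts transitively on the set of homogeneous components. -/

import Mathlib

open scoped TensorProduct DirectSum

section Preliminaries

variable (F : Type*) [Field F]

/-- Isomorphism (equivalence) of representations: an `F`-linear equivalence intertwining
the two actions. -/
def RepIso {G : Type*} [Monoid G] {V V' : Type*} [AddCommMonoid V] [Module F V]
    [AddCommMonoid V'] [Module F V'] (ρ : Representation F G V) (τ : Representation F G V') :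
    Prop :=
  ∃ e : V ≃ₗ[F] V', ∀ (g : G) (v : V), e (ρ g v) = τ g (e v)

/-- Irreducibility of a representation: the space is nonzero and admits no invariant
subspaces other than `⊥` and `⊤`. -/
def IsIrreducibleRep {G : Type*} [Monoid G] {V : Type*} [AddCommMonoid V] [Module F V]
    (ρ : Representation F G V) : Prop :=
  Nontrivial V ∧ ∀ p : Submodule F V, (∀ g : G, ∀ v ∈ p, ρ g v ∈ p) → p = ⊥ ∨ p = ⊤

/-- The subrepresentation on an invariant submodule. -/
def subRep {G : Type*} [Monoid G] {V : Type*} [AddCommMonoid V] [Module F V]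
    (ρ : Representation F G V) (p : Submodule F V) (hp : ∀ g : G, ∀ v ∈ p, ρ g v ∈ p) :
    Representation F G ↥p where
  toFun g := (ρ g).restrict (fun v hv => hp g v hv)
  map_one' := by ext v; simp [LinearMap.restrict_apply]
  map_mul' g₁ g₂ := by ext v; simp [LinearMap.restrict_apply]

/-- A representation is completely reducible if the underlying module is the sum of its
irreducible invariant submodules. -/
def IsCompletelyReducibleRep {G : Type*} [Monoid G] {V : Type*} [AddCommMonoid V]
    [Module F V] (ρ : Representation F G V) : Prop :=
  sSup {q : Submodule F V |
    ∃ hq : ∀ g : G, ∀ v ∈ q, ρ g v ∈ q, IsIrreducibleRep F (subRep F ρ q hq)} = ⊤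

/-- The homogeneous component determined by `σ`: the sum of all irreducible invariant
submodules whose subrepresentation is isomorphic to `σ`. -/
noncomputable def homComponent {G : Type*} [Monoid G] {V W : Type*} [AddCommMonoid V]
    [Module F V] [AddCommMonoid W] [Module F W] (ρ : Representation F G V)
    (σ : Representation F G W) : Submodule F V :=
  sSup {q : Submodule F V |
    ∃ hq : ∀ g : G, ∀ v ∈ q, ρ g v ∈ q,
      IsIrreducibleRep F (subRep F ρ q hq) ∧ RepIso F (subRep F ρ q hq) σ}

/-- The set of all homogeneous components of a representation. -/
noncomputable def homComponents {G : Type*} [Monoid G] {V : Type*} [AddCommMonoid V]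
    [Module F V] (ρ : Representation F G V) : Set (Submodule F V) :=
  {S | ∃ (q : Submodule F V) (hq : ∀ g : G, ∀ v ∈ q, ρ g v ∈ q),
      IsIrreducibleRep F (subRep F ρ q hq) ∧ S = homComponent F ρ (subRep F ρ q hq)}

/-- A representation `ρ` lies over `σ` if it admits an invariant submodule whose
subrepresentation is isomorphic to `σ`. -/
def LiesOver {G : Type*} [Monoid G] {V W : Type*} [AddCommMonoid V] [Module F V]
    [AddCommMonoid W] [Module F W] (ρ : Representation F G V) (σ : Representation F G W) :
    Prop :=
  ∃ (q : Submodule F V) (hq : ∀ g : G, ∀ v ∈ q, ρ g v ∈ q),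
    RepIso F (subRep F ρ q hq) σ

/-- The stabilizer in `G` of a subspace of a representation space. -/
def stabSubgroup {G : Type*} [Group G] {V : Type*} [AddCommGroup V] [Module F V]
    (ρ : Representation F G V) (S : Submodule F V) : Subgroup G where
  carrier := {g : G | S.map (ρ g) = S}
  one_mem' := by
    show S.map (ρ 1) = S
    rw [map_one, Module.End.one_eq_id]
    exact Submodule.map_id S
  mul_mem' := by
    intro a b ha hb
    show S.map (ρ (a * b)) = S
    rw [map_mul, Module.End.mul_eq_comp, Submodule.map_comp, hb, ha]
  inv_mem' := by
    intro a ha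
    show S.map (ρ a⁻¹) = S
    conv_lhs => rw [← ha]
    rw [← Submodule.map_comp, ← Module.End.mul_eq_comp, ← map_mul, inv_mul_cancel, map_one,
      Module.End.one_eq_id, Submodule.map_id]

theorem stabSubgroup_mapsTo {G : Type*} [Group G] {V : Type*} [AddCommGroup V] [Module F V]
    (ρ : Representation F G V) (S : Submodule F V) :
    ∀ g : ↥(stabSubgroup F ρ S), ∀ v ∈ S, ρ (g : G) v ∈ S := by
  intro g v hv
  have hg : S.map (ρ (g : G)) = S := g.2
  have := Submodule.mem_map_of_mem (f := ρ (g : G)) hv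
  rwa [hg] at this

/-- Outer tensor product of representations of two groups. -/
noncomputable def outerRep {G₁ G₂ : Type*} [Monoid G₁] [Monoid G₂] {V₁ V₂ : Type*}
    [AddCommMonoid V₁] [Module F V₁] [AddCommMonoid V₂] [Module F V₂]
    (ρ₁ : Representation F G₁ V₁) (ρ₂ : Representation F G₂ V₂) :
    Representation F (G₁ × G₂) (V₁ ⊗[F] V₂) :=
  Representation.tprod (ρ₁.comp (MonoidHom.fst G₁ G₂)) (ρ₂.comp (MonoidHom.snd G₁ G₂))

/-- A projective representation with factor set `α`. -/
def IsProjRep {G : Type*} [Group G] {W : Type*} [AddCommGroup W] [Module F W]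
    (X : G → (W →ₗ[F] W)) (α : G → G → Fˣ) : Prop :=
  (∀ g : G, Function.Bijective (X g)) ∧
    ∀ g₁ g₂ : G, (X g₁) ∘ₗ (X g₂) = ((α g₁ g₂ : F)) • X (g₁ * g₂)

/-- Irreducibility of a projective representation: no proper nonzero invariant subspace. -/
def IsProjIrred {G : Type*} [Group G] {W : Type*} [AddCommGroup W] [Module F W]
    (X : G → (W →ₗ[F] W)) : Prop :=
  Nontrivial W ∧ ∀ p : Submodule F W, (∀ g : G, ∀ w ∈ p, X g w ∈ p) → p = ⊥ ∨ p = ⊤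

/-- `D` is a system of representatives for the `(H₁,H₂)`-double cosets in `G`. -/
def IsDCosetReps {G : Type*} [Group G] (H₁ H₂ : Subgroup G) (D : Set G) : Prop :=
  ∀ g : G, ∃! d : G, d ∈ D ∧ ∃ h₁ ∈ H₁, ∃ h₂ ∈ H₂, g = h₁ * d * h₂

end Preliminaries

section Induction

variable (F : Type*) [Field F] {G : Type*} [Group G] (H : Subgroup G)
variable {W : Type*} [AddCommGroup W] [Module F W] (σ : Representation F ↥H W)

/-- The submodule of relations defining the induced module `FG ⊗_{FH} W` as a quotient
of `FG ⊗_F W`. -/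
noncomputable def indRel : Submodule (MonoidAlgebra F G) (MonoidAlgebra F G ⊗[F] W) :=
  Submodule.span (MonoidAlgebra F G)
    {z | ∃ (x : H) (w : W),
      z = (MonoidAlgebra.single (x : G) (1 : F)) ⊗ₜ[F] w
            - (1 : MonoidAlgebra F G) ⊗ₜ[F] (σ x w)}

/-- The underlying space of the induced module `ind_H^G W = FG ⊗_{FH} W`. -/
noncomputable def IndCar := (MonoidAlgebra F G ⊗[F] W) ⧸ indRel F H σ

noncomputable instance : AddCommGroup (IndCar F H σ) :=
  inferInstanceAs (AddCommGroup ((MonoidAlgebra F G ⊗[F] W) ⧸ indRel F H σ))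

noncomputable instance : Module (MonoidAlgebra F G) (IndCar F H σ) :=
  inferInstanceAs (Module (MonoidAlgebra F G) ((MonoidAlgebra F G ⊗[F] W) ⧸ indRel F H σ))

noncomputable instance : Module F (IndCar F H σ) :=
  inferInstanceAs (Module F ((MonoidAlgebra F G ⊗[F] W) ⧸ indRel F H σ))

noncomputable instance : IsScalarTower F (MonoidAlgebra F G) (IndCar F H σ) :=
  inferInstanceAs (IsScalarTower F (MonoidAlgebra F G)
    ((MonoidAlgebra F G ⊗[F] W) ⧸ indRel F H σ))

/-- The induced representation of `G` on `ind_H^G W = FG ⊗_{FH} W`. -/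
noncomputable def IndRep : Representation F G (IndCar F H σ) where
  toFun g :=
    { toFun := fun v => (MonoidAlgebra.single g (1 : F) : MonoidAlgebra F G) • v
      map_add' := fun a b => smul_add _ a b
      map_smul' := fun c v => smul_comm _ c v }
  map_one' := by
    ext v
    show MonoidAlgebra.single (1 : G) (1 : F) • v = v
    rw [← MonoidAlgebra.one_def, one_smul]
  map_mul' g₁ g₂ := by
    ext v
    show MonoidAlgebra.single (g₁ * g₂) (1 : F) • v = _
    rw [show (MonoidAlgebra.single (g₁ * g₂) (1 : F) : MonoidAlgebra F G)
          = MonoidAlgebra.single g₁ 1 * MonoidAlgebra.single g₂ 1 by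
        rw [MonoidAlgebra.single_mul_single, one_mul], mul_smul]
    rfl

end Induction

section DirectSums

variable (F : Type*) [Field F] {G : Type*} [Monoid G]

/-- The direct sum of a family of representations. -/
noncomputable def dsumRep {ι : Type*} {V : ι → Type*} [∀ i, AddCommGroup (V i)]
    [∀ i, Module F (V i)] (ρ : ∀ i, Representation F G (V i)) :
    Representation F G (⨁ i, V i) where
  toFun g := DFinsupp.mapRange.linearMap (fun i => ρ i g)
  map_one' := by
    simp only [map_one]
    exact DFinsupp.mapRange.linearMap_id
  map_mul' g₁ g₂ := by
    simp only [map_mul, Module.End.mul_eq_comp]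
    exact DFinsupp.mapRange.linearMap_comp (fun i => ρ i g₁) (fun i => ρ i g₂)

end DirectSums

section Conjugation

variable {G : Type*} [Group G]

/-- Conjugation `x ↦ g x g⁻¹` as a monoid homomorphism of a normal subgroup. -/
def conjHom {N : Subgroup G} (hN : N.Normal) (g : G) : ↥N →* ↥N where
  toFun x := ⟨g * (x : G) * g⁻¹, hN.conj_mem x.1 x.2 g⟩
  map_one' := by ext; simp
  map_mul' x y := by ext; simp [mul_assoc]

/-- The conjugate subgroup `xHx⁻¹`. -/
def conjSubgroup (x : G) (H : Subgroup G) : Subgroup G :=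
  H.map (MulAut.conj x).toMonoidHom

/-- Conjugating back: the homomorphism `K → H`, `k ↦ x⁻¹ k x`, for `K ≤ xHx⁻¹`. -/
def unconjHom (x : G) (H : Subgroup G) {K : Subgroup G} (hK : K ≤ conjSubgroup x H) :
    ↥K →* ↥H where
  toFun k := ⟨x⁻¹ * (k : G) * x, by
    obtain ⟨h, hh, e⟩ := hK k.2
    have : x⁻¹ * (k : G) * x = h := by
      rw [← e]; simp [MulAut.conj_apply, mul_assoc]
    rw [this]; exact hh⟩
  map_one' := by ext; simp
  map_mul' a b := by
    ext
    show x⁻¹ * (↑a * ↑b) * x = (x⁻¹ * ↑a * x) * (x⁻¹ * ↑b * x)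
    group

/-- The homomorphism `K ∩ xHx⁻¹ → H` (with the source regarded as a subgroup of `K`),
given by `k ↦ x⁻¹ k x`. -/
def mackeyHom (x : G) (H K : Subgroup G) :
    ↥((K ⊓ conjSubgroup x H).subgroupOf K) →* ↥H where
  toFun l := ⟨x⁻¹ * ((l : ↥K) : G) * x, by
    have h2 : ((l : ↥K) : G) ∈ K ⊓ conjSubgroup x H := l.2
    obtain ⟨h, hh, e⟩ := h2.2
    have : x⁻¹ * ((l : ↥K) : G) * x = h := by
      rw [← e]; simp [MulAut.conj_apply, mul_assoc]
    rw [this]; exact hh⟩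
  map_one' := by ext; simp
  map_mul' a b := by
    ext
    show x⁻¹ * (↑↑a * ↑↑b) * x = (x⁻¹ * ↑↑a * x) * (x⁻¹ * ↑↑b * x)
    group

end Conjugation

/-!
The sum `∑ g • W` is `G`-invariant, hence all of `V`. Since `N` is normal, `ρ g` carries an
irreducible `N`-subspace to an irreducible one, whose type is the old type twisted by
conjugation with `g`; so `V` is a sum of irreducible `N`-subspaces. In such a representation
every invariant subspace has an invariant complement, and the projection onto an irreducible
`q ≤ ∑ S` along such a complement maps some member of `S` isomorphically onto `q`. This gives the
independence of the homogeneous components, and shows that each of them is the component of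
some `g • W`, i.e. the image under `ρ g` of the component of `W`.
-/

section RepIso

variable {F : Type*} [Field F] {H : Type*} [Monoid H]
  {W W' W'' : Type*} [AddCommMonoid W] [Module F W] [AddCommMonoid W'] [Module F W']
  [AddCommMonoid W''] [Module F W'']
  {σ : Representation F H W} {σ' : Representation F H W'} {σ'' : Representation F H W''}

theorem RepIso.refl (σ : Representation F H W) : RepIso F σ σ :=
  ⟨LinearEquiv.refl F W, fun _ _ => rfl⟩

theorem RepIso.symm (h : RepIso F σ σ') : RepIso F σ' σ := by
  obtain ⟨e, he⟩ := h
  exact ⟨e.symm, fun g v => e.injective (by rw [he, e.apply_symm_apply, e.apply_symm_apply])⟩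

theorem RepIso.trans (h : RepIso F σ σ') (h' : RepIso F σ' σ'') : RepIso F σ σ'' := by
  obtain ⟨e, he⟩ := h
  obtain ⟨e', he'⟩ := h'
  exact ⟨e.trans e', fun g v => by simp [he, he']⟩

theorem RepIso.comp {K : Type*} [Monoid K] (h : RepIso F σ σ') (α : K →* H) :
    RepIso F (σ.comp α) (σ'.comp α) := by
  obtain ⟨e, he⟩ := h
  exact ⟨e, fun g v => he (α g) v⟩

theorem RepIso.isIrreducibleRep (h : RepIso F σ σ') (hσ : IsIrreducibleRep F σ) :
    IsIrreducibleRep F σ' := by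
  obtain ⟨e, he⟩ := h
  refine ⟨haveI := hσ.1; e.injective.nontrivial, fun p hp => ?_⟩
  have hcomap : ∀ g, ∀ v ∈ p.comap e.toLinearMap, σ g v ∈ p.comap e.toLinearMap :=
    fun g v hv => by simpa [he] using hp g _ hv
  rw [← Submodule.map_comap_eq_of_surjective e.surjective p]
  rcases hσ.2 _ hcomap with h | h <;> simp [h]

theorem IsIrreducibleRep.comp {K : Type*} [Monoid K] (hσ : IsIrreducibleRep F σ) {α : K →* H}
    (hα : Function.Surjective α) : IsIrreducibleRep F (σ.comp α) :=
  ⟨hσ.1, fun p hp => hσ.2 p fun g => by obtain ⟨k, rfl⟩ := hα g; exact hp k⟩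

end RepIso

theorem conjHom_conjHom_inv {G : Type*} [Group G] {N : Subgroup G} (hN : N.Normal) (g : G)
    (n : N) : conjHom hN g (conjHom hN g⁻¹ n) = n := by
  ext
  simp [conjHom, mul_assoc]

theorem conjHom_surjective {G : Type*} [Group G] {N : Subgroup G} (hN : N.Normal) (g : G) :
    Function.Surjective (conjHom hN g) :=
  fun n => ⟨_, conjHom_conjHom_inv hN g n⟩

namespace Representation

section Semisimple

variable {F : Type*} [Field F] {H : Type*} [Monoid H] {V V' : Type*} [AddCommGroup V]
  [Module F V] [AddCommGroup V'] [Module F V'] (θ : Representation F H V)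

def IsInvariantSubmodule (q : Submodule F V) : Prop :=
  ∀ g : H, ∀ v ∈ q, θ g v ∈ q

def IsIrreducibleSubmodule (q : Submodule F V) : Prop :=
  IsInvariantSubmodule θ q ∧ q ≠ ⊥ ∧ ∀ r ≤ q, IsInvariantSubmodule θ r → r = ⊥ ∨ r = q

variable {θ} {θ' : Representation F H V'} {q r s c : Submodule F V}

theorem isInvariantSubmodule_bot : IsInvariantSubmodule θ ⊥ := by
  simp [IsInvariantSubmodule]

theorem isInvariantSubmodule_ker {f : V →ₗ[F] V'} (hf : IsIntertwiningMap θ θ' f) :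
    IsInvariantSubmodule θ (LinearMap.ker f) :=
  fun g v hv => by simp_all [hf.isIntertwining]

theorem isInvariantSubmodule_sSup {S : Set (Submodule F V)}
    (hS : ∀ q ∈ S, IsInvariantSubmodule θ q) : IsInvariantSubmodule θ (sSup S) := by
  intro g
  have hle : sSup S ≤ (sSup S).comap (θ g) :=
    sSup_le fun q hq v hv => Submodule.comap_mono (le_sSup hq) (hS q hq g v hv)
  exact fun v hv => hle hv

namespace IsInvariantSubmodule

theorem inf (hq : IsInvariantSubmodule θ q) (hr : IsInvariantSubmodule θ r) :
    IsInvariantSubmodule θ (q ⊓ r) :=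
  fun g v hv => ⟨hq g v hv.1, hr g v hv.2⟩

theorem sup (hq : IsInvariantSubmodule θ q) (hr : IsInvariantSubmodule θ r) :
    IsInvariantSubmodule θ (q ⊔ r) := by
  intro g v hv
  obtain ⟨a, ha, b, hb, rfl⟩ := Submodule.mem_sup.1 hv
  rw [map_add]
  exact Submodule.add_mem_sup (hq g a ha) (hr g b hb)

theorem comp {K : Type*} [Monoid K] (hq : IsInvariantSubmodule θ q) (α : K →* H) :
    IsInvariantSubmodule (θ.comp α) q :=
  fun g => hq (α g)

theorem map {f : V →ₗ[F] V'} (hq : IsInvariantSubmodule θ q) (hf : IsIntertwiningMap θ θ' f) :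
    IsInvariantSubmodule θ' (q.map f) := by
  rintro g _ ⟨v, hv, rfl⟩
  exact ⟨θ g v, hq g v hv, hf.isIntertwining g v⟩

theorem isIntertwiningMap_projection (hq : IsInvariantSubmodule θ q)
    (hc : IsInvariantSubmodule θ c) (h : IsCompl q c) :
    IsIntertwiningMap θ θ (q.projection c h) := by
  refine ⟨fun g v => ?_⟩
  have hsplit : θ g v = θ g (q.projection c h v) + θ g (v - q.projection c h v) := by
    rw [← map_add, add_sub_cancel]
  rw [hsplit, map_add,
    Submodule.projection_apply_of_mem_left h (hq g _ (Submodule.projection_apply_mem h v)),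
    Submodule.projection_apply_of_mem_right h (hc g _ (Submodule.sub_projection_mem h v)),
    add_zero]

end IsInvariantSubmodule

theorem isIrreducibleRep_subRep_iff (hq : IsInvariantSubmodule θ q) :
    IsIrreducibleRep F (subRep F θ q hq) ↔
      q ≠ ⊥ ∧ ∀ r ≤ q, IsInvariantSubmodule θ r → r = ⊥ ∨ r = q := by
  rw [IsIrreducibleRep, Submodule.nontrivial_iff_ne_bot]
  refine and_congr_right fun _ => ⟨fun h r hrq hr => ?_, fun h P hP => ?_⟩
  · rcases h (r.comap q.subtype) (fun g x hx => hr g _ hx) with h | h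
    · left
      rw [← inf_eq_right.2 hrq, ← Submodule.map_comap_subtype, h, Submodule.map_bot]
    · exact .inr (le_antisymm hrq (Submodule.comap_subtype_eq_top.1 h))
  · have hP : IsInvariantSubmodule θ (P.map q.subtype) := by
      rintro g _ ⟨x, hx, rfl⟩
      exact ⟨_, hP g x hx, rfl⟩
    refine (h _ (Submodule.map_subtype_le q P) hP).imp (fun h => ?_) (fun h => ?_) <;>
      apply Submodule.map_injective_of_injective q.injective_subtype
    · rw [h, Submodule.map_bot]
    · rw [h, Submodule.map_subtype_top]

theorem isIrreducibleSubmodule_iff :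
    IsIrreducibleSubmodule θ q ↔ ∃ hq, IsIrreducibleRep F (subRep F θ q hq) :=
  ⟨fun h => ⟨h.1, (isIrreducibleRep_subRep_iff h.1).2 h.2⟩,
    fun ⟨hq, h⟩ => ⟨hq, (isIrreducibleRep_subRep_iff hq).1 h⟩⟩

theorem isCompletelyReducibleRep_iff :
    IsCompletelyReducibleRep F θ ↔ sSup {q | IsIrreducibleSubmodule θ q} = ⊤ := by
  simp only [IsCompletelyReducibleRep, isIrreducibleSubmodule_iff]

theorem repIso_subRep_of_eq (h : q = r) (hq : IsInvariantSubmodule θ q)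
    (hr : IsInvariantSubmodule θ r) : RepIso F (subRep F θ q hq) (subRep F θ r hr) := by
  subst h
  exact .refl _

theorem repIso_subRep_map_of_injective {f : V →ₗ[F] V'} (hf : IsIntertwiningMap θ θ' f)
    (hinj : Function.Injective f) (hq : IsInvariantSubmodule θ q) :
    RepIso F (subRep F θ q hq) (subRep F θ' (q.map f) (hq.map hf)) :=
  ⟨Submodule.equivMapOfInjective f hinj q, fun g v => Subtype.ext (hf.isIntertwining g v)⟩

namespace IsIrreducibleSubmodule

theorem repIso_map {f : V →ₗ[F] V'} (hs : IsIrreducibleSubmodule θ s)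
    (hf : IsIntertwiningMap θ θ' f) (hker : ¬ s ≤ LinearMap.ker f) :
    RepIso F (subRep F θ s hs.1) (subRep F θ' (s.map f) (hs.1.map hf)) := by
  have hdisj : s ⊓ LinearMap.ker f = ⊥ :=
    (hs.2.2 _ inf_le_left (hs.1.inf (isInvariantSubmodule_ker hf))).resolve_right
      fun h => hker (inf_eq_left.1 h)
  refine ⟨LinearEquiv.ofBijective (f.restrict fun v hv => Submodule.mem_map_of_mem hv)
    ⟨fun a b hab => ?_, ?_⟩, fun g v => Subtype.ext (hf.isIntertwining g v)⟩
  · have hmem : (a : V) - b ∈ s ⊓ LinearMap.ker f :=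
      ⟨sub_mem a.2 b.2, by simpa [sub_eq_zero] using congrArg Subtype.val hab⟩
    rw [hdisj, Submodule.mem_bot, sub_eq_zero] at hmem
    exact Subtype.ext hmem
  · rintro ⟨_, v, hv, rfl⟩
    exact ⟨⟨v, hv⟩, rfl⟩

theorem map {f : V →ₗ[F] V'} (hs : IsIrreducibleSubmodule θ s) (hf : IsIntertwiningMap θ θ' f)
    (hker : ¬ s ≤ LinearMap.ker f) : IsIrreducibleSubmodule θ' (s.map f) :=
  isIrreducibleSubmodule_iff.2
    ⟨hs.1.map hf, (hs.repIso_map hf hker).isIrreducibleRep (isIrreducibleSubmodule_iff.1 hs).2⟩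

end IsIrreducibleSubmodule

theorem IsInvariantSubmodule.exists_isCompl (hθ : IsCompletelyReducibleRep F θ)
    (hq : IsInvariantSubmodule θ q) : ∃ c, IsInvariantSubmodule θ c ∧ IsCompl q c := by
  obtain ⟨m, -, ⟨hm, hqm⟩, hmax⟩ :=
    zorn_le_nonempty₀ {c | IsInvariantSubmodule θ c ∧ Disjoint q c}
      (fun C hC hchain _ _ => ⟨sSup C, ⟨isInvariantSubmodule_sSup fun d hd => (hC hd).1,
        hchain.directedOn.disjoint_sSup_right.2 fun d hd => (hC hd).2⟩, fun _ => le_sSup⟩)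
      ⊥ ⟨isInvariantSubmodule_bot, disjoint_bot_right⟩
  refine ⟨m, hm, hqm, codisjoint_iff.2 (top_le_iff.1 ?_)⟩
  rw [← isCompletelyReducibleRep_iff.1 hθ]
  refine sSup_le fun s hs => ?_
  by_contra hsqm
  have hdisj : Disjoint (q ⊔ m) s := disjoint_iff.2 <|
    (hs.2.2 _ inf_le_right ((hq.sup hm).inf hs.1)).resolve_right
      fun h => hsqm (inf_eq_right.1 h)
  have hms : m ⊔ s ≤ m :=
    hmax ⟨hm.sup hs.1, hqm.disjoint_sup_right_of_disjoint_sup_left hdisj⟩ le_sup_left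
  exact hsqm (le_sup_of_le_right (le_sup_right.trans hms))

theorem exists_isIrreducibleSubmodule_le (hθ : IsCompletelyReducibleRep F θ) {X : Submodule F V}
    (hX : IsInvariantSubmodule θ X) (hne : X ≠ ⊥) :
    ∃ s, IsIrreducibleSubmodule θ s ∧ s ≤ X := by
  obtain ⟨c, hc, hXc⟩ := hX.exists_isCompl hθ
  obtain ⟨s, hs, hsc⟩ : ∃ s, IsIrreducibleSubmodule θ s ∧ ¬ s ≤ c := by
    by_contra! h
    have hc_top : ⊤ ≤ c := (isCompletelyReducibleRep_iff.1 hθ).ge.trans (sSup_le h)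
    exact hne (hXc.disjoint.eq_bot_of_le (le_top.trans hc_top))
  refine ⟨s.map (X.projection c hXc), hs.map (hX.isIntertwiningMap_projection hc hXc) ?_,
    LinearMap.map_le_range.trans (Submodule.range_projection hXc).le⟩
  rwa [Submodule.ker_projection]

theorem exists_repIso_of_le_sSup (hθ : IsCompletelyReducibleRep F θ)
    (hq : IsIrreducibleSubmodule θ q) {S : Set (Submodule F V)}
    (hS : ∀ s ∈ S, IsIrreducibleSubmodule θ s) (hle : q ≤ sSup S) :
    ∃ s ∈ S, ∃ hs : IsInvariantSubmodule θ s,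
      RepIso F (subRep F θ s hs) (subRep F θ q hq.1) := by
  obtain ⟨c, hc, hqc⟩ := hq.1.exists_isCompl hθ
  obtain ⟨s, hsS, hsc⟩ : ∃ s ∈ S, ¬ s ≤ c := by
    by_contra! h
    exact hq.2.1 (hqc.disjoint.eq_bot_of_le (hle.trans (sSup_le h)))
  have hπ := hq.1.isIntertwiningMap_projection hc hqc
  have hker : ¬ s ≤ LinearMap.ker (q.projection c hqc) := by rwa [Submodule.ker_projection]
  have himage : s.map (q.projection c hqc) = q :=
    (hq.2.2 _ (LinearMap.map_le_range.trans (Submodule.range_projection hqc).le)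
      ((hS s hsS).1.map hπ)).resolve_left ((hS s hsS).map hπ hker).2.1
  exact ⟨s, hsS, (hS s hsS).1,
    ((hS s hsS).repIso_map hπ hker).trans (repIso_subRep_of_eq himage _ _)⟩

end Semisimple

section HomogeneousComponents

variable {F : Type*} [Field F] {H : Type*} [Monoid H] {V W W' : Type*} [AddCommGroup V]
  [Module F V] [AddCommMonoid W] [Module F W] [AddCommMonoid W'] [Module F W']
  {θ : Representation F H V} {σ : Representation F H W} {σ' : Representation F H W'}
  {q r : Submodule F V}

theorem homComponent_eq_sSup (θ : Representation F H V) (σ : Representation F H W) :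
    homComponent F θ σ =
      sSup {r | ∃ hr : IsIrreducibleSubmodule θ r, RepIso F (subRep F θ r hr.1) σ} :=
  congrArg sSup <| Set.ext fun _ =>
    ⟨fun ⟨hr, hirr, h⟩ => ⟨isIrreducibleSubmodule_iff.2 ⟨hr, hirr⟩, h⟩,
      fun ⟨hr, h⟩ => ⟨hr.1, (isIrreducibleSubmodule_iff.1 hr).2, h⟩⟩

theorem homComponent_congr (h : RepIso F σ σ') : homComponent F θ σ = homComponent F θ σ' :=
  congrArg sSup <| Set.ext fun _ =>
    ⟨fun ⟨hr, hirr, h'⟩ => ⟨hr, hirr, h'.trans h⟩,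
      fun ⟨hr, hirr, h'⟩ => ⟨hr, hirr, h'.trans h.symm⟩⟩

theorem isInvariantSubmodule_homComponent (σ : Representation F H W) :
    IsInvariantSubmodule θ (homComponent F θ σ) :=
  isInvariantSubmodule_sSup fun _ ⟨hr, _⟩ => hr

theorem le_homComponent (hr : IsIrreducibleSubmodule θ r)
    (h : RepIso F (subRep F θ r hr.1) σ) : r ≤ homComponent F θ σ :=
  homComponent_eq_sSup θ σ ▸ le_sSup ⟨hr, h⟩

theorem repIso_of_le_homComponent (hθ : IsCompletelyReducibleRep F θ)
    (hr : IsIrreducibleSubmodule θ r) (hle : r ≤ homComponent F θ σ) :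
    RepIso F (subRep F θ r hr.1) σ := by
  rw [homComponent_eq_sSup] at hle
  obtain ⟨s, ⟨hs, hsσ⟩, _, hsr⟩ := exists_repIso_of_le_sSup hθ hr (fun s hs => hs.1) hle
  exact hsr.symm.trans hsσ

theorem sSup_homComponents (hθ : IsCompletelyReducibleRep F θ) :
    sSup (homComponents F θ) = ⊤ := by
  refine top_le_iff.1 ((isCompletelyReducibleRep_iff.1 hθ).ge.trans (sSup_le fun q hq => ?_))
  obtain ⟨hq', hirr⟩ := isIrreducibleSubmodule_iff.1 hq
  exact (le_homComponent hq (.refl _)).trans (le_sSup ⟨q, hq', hirr, rfl⟩)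

/-- An irreducible subspace of `S ⊓ sSup rest` would have the type of `S` and, lying in the sum
of the irreducible constituents of the other components, also the type of one of those. -/
theorem sSupIndep_homComponents (hθ : IsCompletelyReducibleRep F θ) :
    sSupIndep (homComponents F θ) := by
  intro S hS
  obtain ⟨q, hq, hqirr, rfl⟩ := hS
  set S := homComponent F θ (subRep F θ q hq)
  set rest := homComponents F θ \ {S}
  rw [disjoint_iff]
  by_contra hne
  have hrest_inv : IsInvariantSubmodule θ (sSup rest) := by
    refine isInvariantSubmodule_sSup ?_
    rintro _ ⟨⟨_, _, _, rfl⟩, -⟩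
    exact isInvariantSubmodule_homComponent _
  obtain ⟨s, hs, hsle⟩ := exists_isIrreducibleSubmodule_le hθ
    ((isInvariantSubmodule_homComponent _).inf hrest_inv) hne
  have hsS : homComponent F θ (subRep F θ s hs.1) = S :=
    homComponent_congr (repIso_of_le_homComponent hθ hs (hsle.trans inf_le_left))
  have hrest : sSup rest ≤ sSup {r | ∃ hr : IsIrreducibleSubmodule θ r,
      homComponent F θ (subRep F θ r hr.1) ∈ rest} := by
    refine sSup_le fun T hT => ?_
    obtain ⟨⟨qT, hqT, -, rfl⟩, -⟩ := id hT
    rw [homComponent_eq_sSup θ]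
    refine sSup_le ?_
    rintro r ⟨hr, hiso⟩
    exact le_sSup ⟨hr, by rwa [homComponent_congr hiso]⟩
  obtain ⟨r, ⟨hr, hr_rest⟩, _, hiso⟩ := exists_repIso_of_le_sSup hθ hs (fun r hr => hr.1)
    (hsle.trans (inf_le_right.trans hrest))
  exact hr_rest.2 ((homComponent_congr hiso).trans hsS)

end HomogeneousComponents

theorem map_map_eq_map_mul {F G V : Type*} [Field F] [Group G] [AddCommGroup V] [Module F V]
    {ρ : Representation F G V} (q : Submodule F V) (g h : G) :
    (q.map (ρ g)).map (ρ h) = q.map (ρ (h * g)) := by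
  rw [map_mul, Module.End.mul_eq_comp, Submodule.map_comp]

section Conjugation

variable {F : Type*} [Field F] {G : Type*} [Group G] {N : Subgroup G}
  {V W : Type*} [AddCommGroup V] [Module F V] [AddCommMonoid W] [Module F W]
  {ρ : Representation F G V} {q : Submodule F V}

local notation "θ" => ρ.comp N.subtype

theorem isIntertwiningMap_conj (hN : N.Normal) (g : G) :
    IsIntertwiningMap ((θ).comp (conjHom hN g⁻¹)) θ (ρ g) := by
  refine ⟨fun n v => ?_⟩
  show ρ g (ρ (g⁻¹ * n * g⁻¹⁻¹) v) = ρ n (ρ g v)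
  rw [← Module.End.mul_apply, ← Module.End.mul_apply, ← map_mul, ← map_mul]
  congr 2
  group

theorem IsInvariantSubmodule.map_conj (hN : N.Normal) (hq : IsInvariantSubmodule θ q) (g : G) :
    IsInvariantSubmodule θ (q.map (ρ g)) :=
  (hq.comp _).map (isIntertwiningMap_conj hN g)

theorem repIso_subRep_map_conj (hN : N.Normal) (hq : IsInvariantSubmodule θ q) (g : G) :
    RepIso F ((subRep F θ q hq).comp (conjHom hN g⁻¹))
      (subRep F θ (q.map (ρ g)) (hq.map_conj hN g)) :=
  repIso_subRep_map_of_injective (isIntertwiningMap_conj hN g) (ρ.apply_bijective g).1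
    (hq.comp _)

theorem IsIrreducibleSubmodule.map_conj (hN : N.Normal) (hq : IsIrreducibleSubmodule θ q)
    (g : G) : IsIrreducibleSubmodule θ (q.map (ρ g)) :=
  isIrreducibleSubmodule_iff.2 ⟨hq.1.map_conj hN g,
    (repIso_subRep_map_conj hN hq.1 g).isIrreducibleRep
      ((isIrreducibleSubmodule_iff.1 hq).2.comp (conjHom_surjective hN g⁻¹))⟩

theorem map_homComponent_le (hN : N.Normal) (σ : Representation F N W) (g : G) :
    (homComponent F θ σ).map (ρ g) ≤ homComponent F θ (σ.comp (conjHom hN g⁻¹)) := by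
  rw [homComponent_eq_sSup (σ := σ), Submodule.map_le_iff_le_comap]
  refine sSup_le fun r ⟨hr, hiso⟩ => Submodule.map_le_iff_le_comap.1 ?_
  exact le_homComponent (hr.map_conj hN g)
    ((repIso_subRep_map_conj hN hr.1 g).symm.trans (hiso.comp _))

theorem map_homComponent (hN : N.Normal) (σ : Representation F N W) (g : G) :
    (homComponent F θ σ).map (ρ g) = homComponent F θ (σ.comp (conjHom hN g⁻¹)) := by
  refine le_antisymm (map_homComponent_le hN σ g) ?_
  have hσ : RepIso F ((σ.comp (conjHom hN g⁻¹)).comp (conjHom hN g⁻¹⁻¹)) σ :=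
    ⟨LinearEquiv.refl F W, fun n v => by
      show σ (conjHom hN g⁻¹ (conjHom hN g⁻¹⁻¹ n)) v = σ n v
      rw [conjHom_conjHom_inv]⟩
  have h := Submodule.map_mono (f := ρ g)
    (map_homComponent_le (ρ := ρ) hN (σ.comp (conjHom hN g⁻¹)) g⁻¹)
  rwa [map_map_eq_map_mul, mul_inv_cancel, map_one, Module.End.one_eq_id, Submodule.map_id,
    homComponent_congr hσ] at h

theorem homComponent_subRep_map (hN : N.Normal) (hq : IsInvariantSubmodule θ q) (g : G) :
    homComponent F θ (subRep F θ (q.map (ρ g)) (hq.map_conj hN g)) =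
      (homComponent F θ (subRep F θ q hq)).map (ρ g) := by
  rw [map_homComponent hN, homComponent_congr (repIso_subRep_map_conj hN hq g)]

theorem map_mem_homComponents (hN : N.Normal) {S : Submodule F V} (hS : S ∈ homComponents F θ)
    (g : G) : S.map (ρ g) ∈ homComponents F θ := by
  obtain ⟨q, hq, hqirr, rfl⟩ := hS
  have hq' := (isIrreducibleSubmodule_iff.2 ⟨hq, hqirr⟩).map_conj hN g
  exact ⟨_, hq'.1, (isIrreducibleSubmodule_iff.1 hq').2, (homComponent_subRep_map hN hq g).symm⟩

end Conjugation

section Clifford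

variable {F : Type*} [Field F] {G : Type*} [Group G] {V : Type*} [AddCommGroup V] [Module F V]
  {ρ : Representation F G V} {p : Submodule F V}

theorem _root_.IsIrreducibleRep.iSup_map_eq_top (hρ : IsIrreducibleRep F ρ) (hp : p ≠ ⊥) :
    ⨆ g, p.map (ρ g) = ⊤ := by
  have hinv : ∀ h : G, ∀ v ∈ ⨆ g, p.map (ρ g), ρ h v ∈ ⨆ g, p.map (ρ g) := by
    intro h v hv
    have hle : (⨆ g, p.map (ρ g)).map (ρ h) ≤ ⨆ g, p.map (ρ g) := by
      rw [Submodule.map_iSup]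
      exact iSup_le fun g =>
        (map_map_eq_map_mul p g h).le.trans (le_iSup (fun g => p.map (ρ g)) (h * g))
    exact hle (Submodule.mem_map_of_mem hv)
  have hp_le : p ≤ ⨆ g, p.map (ρ g) :=
    le_iSup_of_le 1 (by rw [map_one, Module.End.one_eq_id, Submodule.map_id])
  exact (hρ.2 _ hinv).resolve_left fun h => hp (eq_bot_iff.2 (h ▸ hp_le))

variable {N : Subgroup G}

local notation "θ" => ρ.comp N.subtype

theorem isCompletelyReducibleRep_of_iSup_map_eq_top (hN : N.Normal)
    (hp : IsIrreducibleSubmodule θ p) (hsum : ⨆ g, p.map (ρ g) = ⊤) :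
    IsCompletelyReducibleRep F θ :=
  isCompletelyReducibleRep_iff.2 <| top_le_iff.1 <|
    hsum ▸ iSup_le fun g => le_sSup (hp.map_conj hN g)

theorem exists_map_homComponent_eq (hN : N.Normal) (hp : IsIrreducibleSubmodule θ p)
    (hsum : ⨆ g, p.map (ρ g) = ⊤) {S : Submodule F V} (hS : S ∈ homComponents F θ) :
    ∃ g, (homComponent F θ (subRep F θ p hp.1)).map (ρ g) = S := by
  obtain ⟨q, hq, hqirr, rfl⟩ := hS
  obtain ⟨_, ⟨g, rfl⟩, _, hiso⟩ :=
    exists_repIso_of_le_sSup (isCompletelyReducibleRep_of_iSup_map_eq_top hN hp hsum)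
      (isIrreducibleSubmodule_iff.2 ⟨hq, hqirr⟩) (S := Set.range fun g => p.map (ρ g))
      (by rintro _ ⟨g, rfl⟩; exact hp.map_conj hN g) (by rw [sSup_range, hsum]; exact le_top)
  exact ⟨g, (homComponent_subRep_map hN hp.1 g).symm.trans (homComponent_congr hiso)⟩

end Clifford

end Representation

open Representation in
theorem clifford_sum_and_homogeneous_components
    (F : Type*) [Field F] {G : Type*} [Group G] (N : Subgroup G) (hN : N.Normal)
    (V : Type*) [AddCommGroup V] [Module F V] (ρ : Representation F G V)
    (hρ : IsIrreducibleRep F ρ)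
    (p : Submodule F V) (hp : ∀ n : ↥N, ∀ v ∈ p, (ρ.comp N.subtype) n v ∈ p)
    (hpirr : IsIrreducibleRep F (subRep F (ρ.comp N.subtype) p hp)) :
    -- (a)
    ((⨆ g : G, p.map (ρ g)) = ⊤ ∧ IsCompletelyReducibleRep F (ρ.comp N.subtype)) ∧
    -- (b): the homogeneous components are independent, sum to the whole space,
    -- are permuted by G, and transitively so
    (sSupIndep (homComponents F (ρ.comp N.subtype)) ∧
      sSup (homComponents F (ρ.comp N.subtype)) = ⊤ ∧
      (∀ S ∈ homComponents F (ρ.comp N.subtype), ∀ g : G,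
        S.map (ρ g) ∈ homComponents F (ρ.comp N.subtype)) ∧
      (∀ S₁ ∈ homComponents F (ρ.comp N.subtype), ∀ S₂ ∈ homComponents F (ρ.comp N.subtype),
        ∃ g : G, S₁.map (ρ g) = S₂)) := by
  have hp' : IsIrreducibleSubmodule (ρ.comp N.subtype) p :=
    isIrreducibleSubmodule_iff.2 ⟨hp, hpirr⟩
  have hsum := hρ.iSup_map_eq_top hp'.2.1
  have hθ := isCompletelyReducibleRep_of_iSup_map_eq_top hN hp' hsum
  refine ⟨⟨hsum, hθ⟩, sSupIndep_homComponents hθ, sSup_homComponents hθ,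
    fun S hS g => map_mem_homComponents hN hS g, fun S₁ hS₁ S₂ hS₂ => ?_⟩
  obtain ⟨g₁, rfl⟩ := exists_map_homComponent_eq hN hp' hsum hS₁
  obtain ⟨g₂, rfl⟩ := exists_map_homComponent_eq hN hp' hsum hS₂
  exact ⟨g₂ * g₁⁻¹, by rw [map_map_eq_map_mul, inv_mul_cancel_right]⟩
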